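/- Let (I,(·,·)) be a Cartan datum, let r ≥ 2 and N ≥ 2 be integers, and let η = {i_1,…,i_m} and η' be disjoint subsets of I such that (α_i,α_{i'}) = 0 for distinct i, i' ∈ η, (α_j,α_{j'}) = 0 for distinct j, j' ∈ η', and d_{i_a} = d for all a (a common value d). Suppose for each a ∈ {1,…,m} there is a subset A_a ⊆ η' with |A_a| = N−1 such that a_{i_a j} = 1 − r for every j ∈ A_a and (α_{i_a},α_j) = 0 for every j ∈ η' ∖ A_a. Set L = (N−1)(r−1) + 1 and fix an enumeration of η'. Then the identity Σ_{(k_1,…,k_m) ∈ {0,…,L}^m} (−1)^{k_1+⋯+k_m} · [L ¦ k_1]_d ⋯ [L ¦ k_m]_d · (f_{i_1}^{k_1} ⋯ f_{i_m}^{k_m}) · (∏_{j∈η'} f_j) · (f_{i_1}^{L−k_1} ⋯ f_{i_m}^{L−k_m}) = 0 holds in U_q^-. -/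

import Mathlib

noncomputable section

open Finset

/-- The field `ℚ(q)` of rational functions. -/
abbrev K : Type := RatFunc ℚ

/-- The variable `q`. -/
def q : K := RatFunc.X

/-- The balanced `q`-integer `[n]_d = (q^{dn} - q^{-dn})/(q^d - q^{-d})`. -/
def qintd (d : ℤ) (n : ℤ) : K := (q ^ (d * n) - q ^ (-(d * n))) / (q ^ d - q ^ (-d))

/-- The `q`-factorial `[m]_d^! = [1]_d ⋯ [m]_d`. -/
def qfactd (d : ℤ) (m : ℕ) : K := ∏ t ∈ Finset.range m, qintd d (t + 1)

/-- The `q`-binomial coefficient `[n ¦ m]_d = [n]_d ⋯ [n-m+1]_d/[m]_d^!`. -/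
def qbinomd (d : ℤ) (n : ℤ) (m : ℕ) : K := (∏ t ∈ Finset.range m, qintd d (n - t)) / qfactd d m

variable {I : Type} [Fintype I] [DecidableEq I]

/-- `d_i = (α_i,α_i)/2`. -/
def dd (form : I → I → ℤ) (i : I) : ℤ := form i i / 2

/-- `a_{ij} = 2(α_i,α_j)/(α_i,α_i)`. -/
def aij (form : I → I → ℤ) (i j : I) : ℤ := 2 * form i j / form i i

/-- The quantum Serre element
`Σ_{k=0}^{1−a_{ij}} (−1)^k [1−a_{ij} ¦ k]_{d_i} f_i^k f_j f_i^{1−a_{ij}−k}`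
in the free algebra. -/
def serre (form : I → I → ℤ) (i j : I) : FreeAlgebra K I :=
  ∑ k ∈ Finset.range ((1 - aij form i j).toNat + 1),
    ((-1 : K) ^ k * qbinomd (dd form i) (1 - aij form i j) k) •
      ((FreeAlgebra.ι K i) ^ k * FreeAlgebra.ι K j *
        (FreeAlgebra.ι K i) ^ ((1 - aij form i j).toNat - k))

/-- The relation imposing the quantum Serre relations. -/
def serreRel (form : I → I → ℤ) : FreeAlgebra K I → FreeAlgebra K I → Prop :=
  fun x y => ∃ i j, i ≠ j ∧ x = serre form i j ∧ y = 0

/-- The negative part `U_q^-` of the quantized enveloping algebra: the quotient of the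
free associative `ℚ(q)`-algebra on the `f_i` by the quantum Serre relations. -/
abbrev Uneg (form : I → I → ℤ) : Type := RingQuot (serreRel form)

/-- The generator `f_i` of `U_q^-`. -/
def fgen (form : I → I → ℤ) (i : I) : Uneg form :=
  RingQuot.mkAlgHom K (serreRel form) (FreeAlgebra.ι K i)

/-!
For a generator `F = f_i`, the `q`-Serre operator `x ↦ Σ_k (-1)^k [n ¦ k]_d F^k x F^{n-k}` is the
composite of the twisted commutators `x ↦ x F - c_t F x`, `c_t = q^{d(n-1-2t)}`, `t < n`. Twisted
commutators obey a twisted Leibniz rule, and the constants `c_t` are additive in the length, so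
if the operator of length `n + 1` kills `x` and that of length `m + 1` kills `y`, the one of
length `n + m + 1` kills `x y`. The Serre relations say that `f_j` is killed by the operator of
`f_{i_a}` of length `1 - a_{i_a j}`, which is `r` on `A_a` and `1` off it; hence `∏_{η'} f_j` is
killed by the operator of length `(N-1)(r-1) + 1 = L` of every `f_{i_a}`. As the `f_{i_a}`
commute, the `m`-fold sum is the composite of the length-`L` operators of `f_{i_1}, …, f_{i_m}`
applied to `∏_{η'} f_j`, hence zero.
-/

lemma q_ne_zero : q ≠ 0 := RatFunc.X_ne_zero

lemma intDegree_q_zpow (z : ℤ) : (q ^ z).intDegree = z := by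
  have hnat (n : ℕ) : (q ^ n).intDegree = n := by
    rw [q, ← RatFunc.algebraMap_X, ← map_pow, RatFunc.intDegree_polynomial,
      Polynomial.natDegree_X_pow]
  rcases z with n | n
  · simpa using hnat n
  · rw [zpow_negSucc, RatFunc.intDegree_inv, hnat]; rfl

lemma q_zpow_injective : Function.Injective (q ^ · : ℤ → K) := fun a b h => by
  simpa [intDegree_q_zpow] using congrArg RatFunc.intDegree h

lemma qintd_ne_zero {d n : ℤ} (hd : d ≠ 0) (hn : n ≠ 0) : qintd d n ≠ 0 := by
  refine div_ne_zero ?_ ?_ <;> refine sub_ne_zero.mpr (q_zpow_injective.ne ?_)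
  · have := mul_ne_zero hd hn; omega
  · omega

lemma qintd_zero (d : ℤ) : qintd d 0 = 0 := by simp [qintd]

lemma qintd_add (d a b : ℤ) :
    qintd d (a + b) = q ^ (d * b) * qintd d a + q ^ (-(d * a)) * qintd d b := by
  simp only [qintd, mul_div_assoc', ← add_div]
  congr 1
  rw [mul_add, neg_add, zpow_add₀ q_ne_zero, zpow_add₀ q_ne_zero]
  ring

lemma qfactd_succ (d : ℤ) (k : ℕ) : qfactd d (k + 1) = qfactd d k * qintd d (k + 1) :=
  Finset.prod_range_succ _ _

lemma qfactd_ne_zero {d : ℤ} (hd : d ≠ 0) (m : ℕ) : qfactd d m ≠ 0 :=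
  Finset.prod_ne_zero_iff.mpr fun _ _ => qintd_ne_zero hd (by omega)

lemma qbinomd_zero (d n : ℤ) : qbinomd d n 0 = 1 := by simp [qbinomd, qfactd]

lemma qbinomd_self_succ (d : ℤ) (p : ℕ) : qbinomd d p (p + 1) = 0 := by
  rw [qbinomd, Finset.prod_eq_zero (Finset.self_mem_range_succ p) (by simp [qintd_zero]),
    zero_div]

lemma qbinomd_pascal {d : ℤ} (hd : d ≠ 0) (n : ℤ) (k : ℕ) :
    qbinomd d n (k + 1) =
      q ^ (d * (k + 1)) * qbinomd d (n - 1) (k + 1) +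
        q ^ (-(d * (n - (k + 1)))) * qbinomd d (n - 1) k := by
  set P := ∏ t ∈ Finset.range k, qintd d (n - 1 - t)
  have hfirst : ∏ t ∈ Finset.range (k + 1), qintd d (n - t) = qintd d n * P := by
    rw [Finset.prod_range_succ', mul_comm]
    simp only [P, Nat.cast_succ, Nat.cast_zero, sub_zero, sub_add_eq_sub_sub_swap]
  have hsplit : qintd d n = q ^ (d * (k + 1)) * qintd d (n - 1 - k) +
      q ^ (-(d * (n - (k + 1)))) * qintd d (k + 1) := by
    have := qintd_add d (n - (k + 1)) (k + 1)
    rw [sub_add_cancel] at this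
    rw [this, sub_sub, add_comm 1]
  have hk : qintd d (k + 1) ≠ 0 := qintd_ne_zero hd (by omega)
  rw [qbinomd, qbinomd, qbinomd, hfirst, Finset.prod_range_succ, qfactd_succ,
    ← mul_div_mul_right P _ hk]
  field_simp [qfactd_ne_zero hd k]
  rw [hsplit]
  ring

lemma Finset.sum_piFinset_const_succ {M κ : Type*} [AddCommMonoid M] (s : Finset κ) (n : ℕ)
    (f : (Fin (n + 1) → κ) → M) :
    ∑ k ∈ Fintype.piFinset (fun _ => s), f k =
      ∑ k₀ ∈ s, ∑ k ∈ Fintype.piFinset (fun _ => s), f (Fin.cons k₀ k) := by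
  rw [← Finset.sum_product']
  refine Finset.sum_nbij' (fun k => (k 0, Fin.tail k)) (fun p => Fin.cons p.1 p.2) ?_ ?_ ?_ ?_ ?_
    <;> simp +contextual [Fin.forall_fin_succ, Fin.tail]

lemma Finset.card_filter_comp_mem {ι β : Type*} [Fintype ι] [DecidableEq β] {e : ι → β}
    (he : Function.Injective e) {s : Finset β} (hs : s ⊆ Finset.univ.image e) :
    #{b | e b ∈ s} = #s :=
  Finset.card_nbij e (fun b hb => (Finset.mem_filter.mp hb).2) he.injOn fun j hj => by
    obtain ⟨b, -, rfl⟩ := Finset.mem_image.mp (hs hj)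
    exact ⟨b, by simpa using hj, rfl⟩

section SerreOperators

variable {A : Type*} [Ring A] [Algebra K A]

def twistedAd (F : A) (c : K) : A →ₗ[K] A :=
  LinearMap.mulRight K F - c • LinearMap.mulLeft K F

lemma twistedAd_apply (F : A) (c : K) (x : A) : twistedAd F c x = x * F - c • (F * x) := rfl

lemma twistedAd_mul (F : A) (c₁ c₂ : K) (x y : A) :
    twistedAd F (c₁ * c₂) (x * y) = x * twistedAd F c₂ y + c₂ • (twistedAd F c₁ x * y) := by
  simp only [twistedAd_apply, mul_sub, sub_mul, smul_sub, mul_smul_comm, smul_mul_assoc,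
    smul_smul, mul_assoc, mul_comm c₂ c₁]
  abel

def twistedAdChain (F : A) (d : ℤ) (n : ℕ) : ℕ → A →ₗ[K] A
  | 0 => LinearMap.id
  | p + 1 => twistedAd F (q ^ (d * ((n : ℤ) - 1 - 2 * p))) ∘ₗ twistedAdChain F d n p

lemma twistedAdChain_eq_zero_of_le (F : A) (d : ℤ) (n : ℕ) {x : A} {p p' : ℕ} (hp : p ≤ p')
    (h : twistedAdChain F d n p x = 0) : twistedAdChain F d n p' x = 0 := by
  induction p', hp using Nat.le_induction with
  | base => exact h
  | succ p' _ ih => rw [twistedAdChain, LinearMap.comp_apply, ih, map_zero]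

def chainCoeff (d : ℤ) (n p k : ℕ) : K :=
  (-1) ^ k * q ^ (d * (k * ((n : ℤ) - p))) * qbinomd d p k

lemma chainCoeff_zero_right (d : ℤ) (n p : ℕ) : chainCoeff d n p 0 = 1 := by
  simp [chainCoeff, qbinomd_zero]

lemma chainCoeff_self_succ (d : ℤ) (n p : ℕ) : chainCoeff d n p (p + 1) = 0 := by
  simp [chainCoeff, qbinomd_self_succ]

lemma chainCoeff_succ_succ {d : ℤ} (hd : d ≠ 0) (n p k : ℕ) :
    chainCoeff d n (p + 1) (k + 1) =
      chainCoeff d n p (k + 1) - q ^ (d * ((n : ℤ) - 1 - 2 * p)) * chainCoeff d n p k := by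
  have hpascal := qbinomd_pascal hd ((p : ℤ) + 1) k
  simp only [add_sub_cancel_right, add_sub_add_right_eq_sub] at hpascal
  simp only [chainCoeff, Nat.cast_succ, hpascal, pow_succ]
  have e₁ : q ^ (d * ((k + 1) * ((n : ℤ) - (p + 1)))) * q ^ (d * (k + 1)) =
      q ^ (d * ((k + 1) * ((n : ℤ) - p))) := by
    rw [← zpow_add₀ q_ne_zero]; ring_nf
  have e₂ : q ^ (d * ((k + 1) * ((n : ℤ) - (p + 1)))) * q ^ (-(d * (p - k))) =
      q ^ (d * ((n : ℤ) - 1 - 2 * p)) * q ^ (d * (k * ((n : ℤ) - p))) := by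
    rw [← zpow_add₀ q_ne_zero, ← zpow_add₀ q_ne_zero]; ring_nf
  linear_combination ((-1) ^ k * (-1) * qbinomd d p (k + 1)) * e₁ +
    ((-1) ^ k * (-1) * qbinomd d p k) * e₂

lemma twistedAd_monomial (F : A) (c : K) (x : A) (i j : ℕ) :
    twistedAd F c (F ^ i * x * F ^ j) =
      F ^ i * x * F ^ (j + 1) - c • (F ^ (i + 1) * x * F ^ j) := by
  rw [twistedAd_apply, pow_succ, pow_succ', mul_assoc _ (F ^ j), mul_assoc F, mul_assoc F]

lemma twistedAdChain_apply {d : ℤ} (hd : d ≠ 0) (F : A) (n : ℕ) (x : A) (p : ℕ) :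
    twistedAdChain F d n p x =
      ∑ k ∈ Finset.range (p + 1), chainCoeff d n p k • (F ^ k * x * F ^ (p - k)) := by
  induction p with
  | zero => simp [twistedAdChain, chainCoeff_zero_right]
  | succ p ih =>
    set c : K := q ^ (d * ((n : ℤ) - 1 - 2 * p))
    have hstep : twistedAdChain F d n (p + 1) x =
        ∑ k ∈ Finset.range (p + 2), chainCoeff d n p k • (F ^ k * x * F ^ (p + 1 - k)) -
          ∑ k ∈ Finset.range (p + 1),
            (c * chainCoeff d n p k) • (F ^ (k + 1) * x * F ^ (p - k)) := by
      rw [Finset.sum_range_succ _ (p + 1), chainCoeff_self_succ, zero_smul, add_zero,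
        twistedAdChain, LinearMap.comp_apply, ih, map_sum, ← Finset.sum_sub_distrib]
      refine Finset.sum_congr rfl fun k hk => ?_
      rw [map_smul, twistedAd_monomial, smul_sub, smul_smul, mul_comm c,
        Nat.sub_add_comm (Finset.mem_range_succ_iff.mp hk)]
    rw [hstep, Finset.sum_range_succ', Finset.sum_range_succ' _ (p + 1), add_sub_right_comm,
      ← Finset.sum_sub_distrib]
    simp only [chainCoeff_zero_right, Nat.sub_zero, Nat.succ_sub_succ, ← sub_smul,
      chainCoeff_succ_succ hd]
    rfl

def serreOp (d : ℤ) (L : ℕ) (F : A) : A →ₗ[K] A := twistedAdChain F d L L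

lemma serreOp_apply {d : ℤ} (hd : d ≠ 0) (L : ℕ) (F x : A) :
    serreOp d L F x =
      ∑ k ∈ Finset.range (L + 1), ((-1) ^ k * qbinomd d L k) • (F ^ k * x * F ^ (L - k)) := by
  simp [serreOp, twistedAdChain_apply hd, chainCoeff]

lemma twistedAdChain_mul_mem_span (F : A) (d : ℤ) (n m : ℕ) (x y : A) (p : ℕ) :
    twistedAdChain F d (n + m + 1) p (x * y) ∈ Submodule.span K
      ((fun ab : ℕ × ℕ => twistedAdChain F d (n + 1) ab.1 x * twistedAdChain F d (m + 1) ab.2 y) ''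
        {ab | ab.1 + ab.2 = p}) := by
  induction p with
  | zero => exact Submodule.subset_span ⟨(0, 0), rfl, rfl⟩
  | succ p ih =>
    rw [twistedAdChain, LinearMap.comp_apply]
    refine (Submodule.map_span_le _ _ _).mpr ?_ (Submodule.mem_map_of_mem ih)
    rintro _ ⟨⟨a, b⟩, hab : a + b = p, rfl⟩
    -- the step constants are additive in the level: `q^{d(n+m-2p)} = q^{d(n-2a)} q^{d(m-2b)}`
    have hc : q ^ (d * (((n + m + 1 : ℕ) : ℤ) - 1 - 2 * p)) =
        q ^ (d * (((n + 1 : ℕ) : ℤ) - 1 - 2 * a)) * q ^ (d * (((m + 1 : ℕ) : ℤ) - 1 - 2 * b)) := by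
      rw [← zpow_add₀ q_ne_zero, ← hab]
      push_cast
      ring_nf
    rw [hc, twistedAd_mul]
    exact Submodule.add_mem _ (Submodule.subset_span ⟨(a, b + 1), by simp [← hab]; omega, rfl⟩)
      (Submodule.smul_mem _ _ (Submodule.subset_span ⟨(a + 1, b), by simp [← hab]; omega, rfl⟩))

lemma serreOp_mul_eq_zero {d : ℤ} {F x y : A} {n m : ℕ} (hx : serreOp d (n + 1) F x = 0)
    (hy : serreOp d (m + 1) F y = 0) : serreOp d (n + m + 1) F (x * y) = 0 := by
  have hvanish : Submodule.span K ((fun ab : ℕ × ℕ =>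
      twistedAdChain F d (n + 1) ab.1 x * twistedAdChain F d (m + 1) ab.2 y) ''
        {ab | ab.1 + ab.2 = n + m + 1}) ≤ ⊥ := by
    refine Submodule.span_le.mpr ?_
    rintro _ ⟨⟨a, b⟩, hab : a + b = n + m + 1, rfl⟩
    rw [SetLike.mem_coe, Submodule.mem_bot]
    dsimp only
    rcases le_or_gt (n + 1) a with ha | ha
    · rw [twistedAdChain_eq_zero_of_le F d _ ha hx, zero_mul]
    · rw [twistedAdChain_eq_zero_of_le F d _ (by omega : m + 1 ≤ b) hy, mul_zero]
  exact (Submodule.mem_bot K).mp (hvanish (twistedAdChain_mul_mem_span F d n m x y _))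

lemma serreOp_one_one (d : ℤ) (F : A) : serreOp d 1 F 1 = 0 := by
  simp [serreOp, twistedAdChain, twistedAd_apply]

lemma serreOp_prod_ofFn_eq_zero {d : ℤ} {F : A} {w : ℕ} (y : Fin w → A) (s : Fin w → ℕ)
    (h : ∀ b, serreOp d (s b + 1) F (y b) = 0) :
    serreOp d (∑ b, s b + 1) F (List.ofFn y).prod = 0 := by
  induction w with
  | zero => exact serreOp_one_one d F
  | succ w ih =>
    rw [List.ofFn_succ, List.prod_cons, Fin.sum_univ_succ]
    exact serreOp_mul_eq_zero (h 0) (ih _ _ fun b => h b.succ)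

lemma commute_of_serreOp_one {d : ℤ} {F y : A} (h : serreOp d 1 F y = 0) : Commute F y :=
  (sub_eq_zero.mp (by simpa [serreOp, twistedAdChain, twistedAd_apply] using h)).symm

def multiSerreSum (d : ℤ) (L : ℕ) {m : ℕ} (g : Fin m → A) (x : A) : A :=
  ∑ k ∈ Fintype.piFinset (fun _ : Fin m => Finset.range (L + 1)),
    ((-1 : K) ^ (∑ a, k a) * ∏ a, qbinomd d L (k a)) •
      ((List.ofFn fun a => g a ^ k a).prod * x * (List.ofFn fun a => g a ^ (L - k a)).prod)

lemma multiSerreSum_succ {d : ℤ} (hd : d ≠ 0) (L : ℕ) {m : ℕ} (g : Fin (m + 1) → A) (x : A)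
    (hg : ∀ a : Fin m, Commute (g 0) (g a.succ)) :
    multiSerreSum d L g x = serreOp d L (g 0) (multiSerreSum d L (Fin.tail g) x) := by
  rw [multiSerreSum, Finset.sum_piFinset_const_succ, serreOp_apply hd, multiSerreSum]
  refine Finset.sum_congr rfl fun k₀ _ => ?_
  rw [Finset.mul_sum, Finset.sum_mul, Finset.smul_sum]
  refine Finset.sum_congr rfl fun k _ => ?_
  have hQ : Commute (g 0 ^ (L - k₀)) (List.ofFn fun a : Fin m => g a.succ ^ (L - k a)).prod :=
    Commute.list_prod_right _ _ fun _ hy => by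
      obtain ⟨a, rfl⟩ := List.mem_ofFn.mp hy
      exact (hg a).pow_pow _ _
  simp only [Fin.sum_univ_succ, Fin.prod_univ_succ, Fin.cons_zero, Fin.cons_succ, List.ofFn_succ,
    List.prod_cons, pow_add, Fin.tail]
  rw [hQ.eq, mul_smul_comm, smul_mul_assoc, smul_smul]
  simp only [mul_assoc]
  congr 1
  ring

lemma multiSerreSum_eq_zero {d : ℤ} (hd : d ≠ 0) (L : ℕ) {m : ℕ} (g : Fin (m + 1) → A) (x : A)
    (hg : Pairwise fun a b => Commute (g a) (g b)) (hx : serreOp d L (g (Fin.last m)) x = 0) :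
    multiSerreSum d L g x = 0 := by
  induction m with
  | zero =>
    rw [multiSerreSum_succ hd L g x fun a => a.elim0]
    simpa [multiSerreSum] using hx
  | succ m ih =>
    rw [multiSerreSum_succ hd L g x fun a => hg (Fin.succ_ne_zero a).symm,
      ih (Fin.tail g) (hg.comp_of_injective (Fin.succ_injective _)) hx, map_zero]

end SerreOperators

section Uneg

variable {I : Type}

lemma serreOp_fgen_eq_zero (form : I → I → ℤ) {i j : I} (hij : i ≠ j) (hd : dd form i ≠ 0)
    {ρ : ℕ} (hρ : 1 - aij form i j = ρ) :
    serreOp (dd form i) ρ (fgen form i) (fgen form j) = 0 := by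
  have hrel := RingQuot.mkAlgHom_rel K (show serreRel form (serre form i j) 0 from
    ⟨i, j, hij, rfl, rfl⟩)
  rw [map_zero, serre, map_sum, hρ, Int.toNat_natCast] at hrel
  rw [serreOp_apply hd, ← hrel]
  simp [fgen]

lemma fgen_commute (form : I → I → ℤ) {i j : I} (hij : i ≠ j) (hd : dd form i ≠ 0)
    (hform : form i j = 0) : Commute (fgen form i) (fgen form j) :=
  commute_of_serreOp_one (serreOp_fgen_eq_zero form hij hd (by simp [aij, hform]))

lemma serreOp_fgen_prod_eq_zero (form : I → I → ℤ) {i : I} (hd : dd form i ≠ 0) {w : ℕ}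
    (e' : Fin w → I) (hi : ∀ b, i ≠ e' b) (s : Fin w → ℕ)
    (hs : ∀ b, 1 - aij form i (e' b) = s b + 1) :
    serreOp (dd form i) (∑ b, s b + 1) (fgen form i) (List.ofFn fun b => fgen form (e' b)).prod =
      0 :=
  serreOp_prod_ofFn_eq_zero _ s fun b => serreOp_fgen_eq_zero form (hi b) hd (by simp [hs])

end Uneg

theorem stmt17_general {I : Type} [DecidableEq I]
    (form : I → I → ℤ)
    (hdiag_pos : ∀ i, 0 < form i i) (hdiag_even : ∀ i, 2 ∣ form i i)
    (r N : ℕ) (hr : 2 ≤ r)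
    (m w : ℕ) (hm : 1 ≤ m)
    (e : Fin m → I) (he : Function.Injective e)
    (e' : Fin w → I) (he' : Function.Injective e')
    (hdisj : ∀ a b, e a ≠ e' b)
    (horthη : ∀ a b, a ≠ b → form (e a) (e b) = 0)
    (d : ℤ) (hd : ∀ a, dd form (e a) = d)
    (A : Fin m → Finset I)
    (hAsub : ∀ a, A a ⊆ Finset.univ.image e')
    (hAcard : ∀ a, (A a).card = N - 1)
    (haij : ∀ a, ∀ j ∈ A a, aij form (e a) j = 1 - (r : ℤ))
    (hzero : ∀ a, ∀ j ∈ Finset.univ.image e', j ∉ A a → form (e a) j = 0) :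
    ∑ k ∈ Fintype.piFinset (fun _ : Fin m => Finset.range ((N - 1) * (r - 1) + 1 + 1)),
      ((-1 : K) ^ (∑ a, k a) *
        ∏ a, qbinomd d (((N - 1) * (r - 1) + 1 : ℕ) : ℤ) (k a)) •
        ((List.ofFn fun a => (fgen form (e a)) ^ (k a)).prod *
          (List.ofFn fun b => fgen form (e' b)).prod *
          (List.ofFn fun a => (fgen form (e a)) ^ ((N - 1) * (r - 1) + 1 - k a)).prod) = 0 := by
  obtain ⟨m, rfl⟩ : ∃ m', m = m' + 1 := ⟨m - 1, by omega⟩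
  have hd0 (a) : dd form (e a) ≠ 0 := by
    have := hdiag_pos (e a); have := hdiag_even (e a); unfold dd; omega
  have hkill (a) : serreOp d ((N - 1) * (r - 1) + 1) (fgen form (e a))
      (List.ofFn fun b => fgen form (e' b)).prod = 0 := by
    have hsum : ∑ b, (if e' b ∈ A a then r - 1 else 0) = (N - 1) * (r - 1) := by
      rw [← Finset.sum_filter, Finset.sum_const, smul_eq_mul,
        Finset.card_filter_comp_mem he' (hAsub a), hAcard]
    rw [← hsum, ← hd a]
    refine serreOp_fgen_prod_eq_zero form (hd0 a) e' (hdisj a) _ fun b => ?_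
    split_ifs with hb
    · rw [haij a _ hb]; omega
    · simp [aij, hzero a _ (Finset.mem_image_of_mem e' (Finset.mem_univ b)) hb]
  have hcomm : Pairwise fun a b => Commute (fgen form (e a)) (fgen form (e b)) :=
    fun a b hab => fgen_commute form (he.ne hab) (hd0 a) (horthη a b hab)
  exact multiSerreSum_eq_zero (hd _ ▸ hd0 (Fin.last m)) _ (fun a => fgen form (e a)) _ hcomm
    (hkill _)

/-- let `η = {i_1,…,i_m}` (enumerated by the injection `e : Fin m → I`)
and `η'` (enumerated by the injection `e' : Fin w → I`) be disjoint subsets of `I`, with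
orthogonality inside `η` and inside `η'`, common value `d = d_{i_a}`, and for each `a`
a subset `A_a ⊆ η'` of cardinality `N−1` with `a_{i_a j} = 1−r` on `A_a` and
`(α_{i_a},α_j) = 0` off `A_a`.  With `L = (N−1)(r−1)+1`,
`Σ_{(k_1,…,k_m)∈{0,…,L}^m} (−1)^{k_1+⋯+k_m} [L ¦ k_1]_d ⋯ [L ¦ k_m]_d
  (f_{i_1}^{k_1}⋯f_{i_m}^{k_m}) (∏_{j∈η'} f_j) (f_{i_1}^{L−k_1}⋯f_{i_m}^{L−k_m}) = 0`
in `U_q^-`. -/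
theorem stmt17 {I : Type} [Fintype I] [DecidableEq I] [Nonempty I]
    (form : I → I → ℤ)
    (hsymm : ∀ i j, form i j = form j i)
    (hdiag_pos : ∀ i, 0 < form i i) (hdiag_even : ∀ i, 2 ∣ form i i)
    (hoff : ∀ i j, i ≠ j → 2 * form i j ≤ 0 ∧ form i i ∣ 2 * form i j)
    (r N : ℕ) (hr : 2 ≤ r) (hN : 2 ≤ N)
    (m w : ℕ) (hm : 1 ≤ m) (hw : 1 ≤ w)
    (e : Fin m → I) (he : Function.Injective e)
    (e' : Fin w → I) (he' : Function.Injective e')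
    (hdisj : ∀ a b, e a ≠ e' b)
    (horthη : ∀ a b, a ≠ b → form (e a) (e b) = 0)
    (horthη' : ∀ a b, a ≠ b → form (e' a) (e' b) = 0)
    (d : ℤ) (hd : ∀ a, dd form (e a) = d)
    (A : Fin m → Finset I)
    (hAsub : ∀ a, A a ⊆ Finset.univ.image e')
    (hAcard : ∀ a, (A a).card = N - 1)
    (haij : ∀ a, ∀ j ∈ A a, aij form (e a) j = 1 - (r : ℤ))
    (hzero : ∀ a, ∀ j ∈ Finset.univ.image e', j ∉ A a → form (e a) j = 0) :
    ∑ k ∈ Fintype.piFinset (fun _ : Fin m => Finset.range ((N - 1) * (r - 1) + 1 + 1)),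
      ((-1 : K) ^ (∑ a, k a) *
        ∏ a, qbinomd d (((N - 1) * (r - 1) + 1 : ℕ) : ℤ) (k a)) •
        ((List.ofFn fun a => (fgen form (e a)) ^ (k a)).prod *
          (List.ofFn fun b => fgen form (e' b)).prod *
          (List.ofFn fun a => (fgen form (e a)) ^ ((N - 1) * (r - 1) + 1 - k a)).prod) = 0 :=
  stmt17_general form hdiag_pos hdiag_even r N hr m w hm e he e' he' hdisj horthη d hd A hAsub
    hAcard haij hzero
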